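/- For θ > -1/2 and q > -1/2, the Mellin/Gaussian-mixture identity holds: (2/E(|B|^{2θ})) ∫_0^∞ λ^{2θ} μ(q, λ) φ(λ) dλ = Γ(θ+1) Γ(q+1/2) / (Γ(1/2) Γ(q+θ+1)), where μ(q, λ) = E[(B²/(λ²+B²))^q] for B standard Gaussian, φ the standard Gaussian density, and E(|B|^{2θ}) = 2^θ Γ(θ+1/2)/√π. -/

import Mathlib

open Real MeasureTheory

/-- `μ(q,λ) = E[(B²/(λ²+B²))^q]` for a standard Gaussian `B`, written as an integral
against the standard Gaussian density. -/
noncomputable def structMoment (q l : ℝ) : ℝ :=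
  ∫ x : ℝ, (x ^ 2 / (l ^ 2 + x ^ 2)) ^ q * ((Real.sqrt (2 * Real.pi))⁻¹ * Real.exp (-x ^ 2 / 2))

/-!
Write `μ(q, λ)` as twice an integral over `(0, ∞)` and substitute `x = λ t`. After Tonelli, the
`λ`-integral of `λ^{2θ+1} exp(-(1 + t²) λ² / 2)` is a Gamma integral, which leaves the beta-prime
integral `∫₀^∞ t^{2q} (1 + t²)^{-(q+θ+1)} dt = B(q + 1/2, θ + 1/2) / 2`; the substitution
`u = t² / (1 + t²)` turns it into Euler's beta integral.
-/

open Set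

lemma integral_rpow_mul_one_sub_rpow {a b : ℝ} (ha : 0 < a) (hb : 0 < b) :
    ∫ x in Ioo 0 1, x ^ (a - 1) * (1 - x) ^ (b - 1) = Gamma a * Gamma b / Gamma (a + b) := by
  have hbeta : Complex.betaIntegral a b =
      ((∫ x in Ioo 0 1, x ^ (a - 1) * (1 - x) ^ (b - 1) : ℝ) : ℂ) := by
    rw [integral_Ioc_eq_integral_Ioo.symm, ← intervalIntegral.integral_of_le zero_le_one,
      ← intervalIntegral.integral_ofReal, Complex.betaIntegral]
    refine intervalIntegral.integral_congr fun x hx => ?_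
    rw [uIcc_of_le zero_le_one] at hx
    push_cast
    rw [Complex.ofReal_cpow hx.1, Complex.ofReal_cpow (sub_nonneg.2 hx.2)]
    push_cast; rfl
  have h := Complex.Gamma_mul_Gamma_eq_betaIntegral (s := a) (t := b) (by simpa) (by simpa)
  rw [hbeta, ← Complex.ofReal_add] at h
  simp only [Complex.Gamma_ofReal, ← Complex.ofReal_mul] at h
  rw [eq_div_iff (Gamma_pos_of_pos (add_pos ha hb)).ne', mul_comm]
  exact_mod_cast h.symm

lemma integrableOn_rpow_mul_one_sub_rpow {a b : ℝ} (ha : 0 < a) (hb : 0 < b) :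
    IntegrableOn (fun x : ℝ => x ^ (a - 1) * (1 - x) ^ (b - 1)) (Ioo 0 1) := by
  have h := (Complex.betaIntegral_convergent (u := a) (v := b) (by simpa) (by simpa)).norm
  rw [intervalIntegrable_iff_integrableOn_Ioc_of_le zero_le_one] at h
  refine (h.mono_set Ioo_subset_Ioc_self).congr_fun (fun x hx => ?_) measurableSet_Ioo
  have h1 : (1 : ℂ) - x = ((1 - x : ℝ) : ℂ) := by push_cast; rfl
  dsimp only
  rw [norm_mul, h1, Complex.norm_cpow_eq_rpow_re_of_pos hx.1,
    Complex.norm_cpow_eq_rpow_re_of_pos (sub_pos.2 hx.2)]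
  simp

lemma hasDerivAt_sq_div_one_add_sq (t : ℝ) :
    HasDerivAt (fun t : ℝ => t ^ 2 / (1 + t ^ 2)) (2 * t / (1 + t ^ 2) ^ 2) t :=
  ((hasDerivAt_pow 2 t).div ((hasDerivAt_pow 2 t).const_add 1) (by positivity)).congr_deriv
    (by push_cast; ring)

lemma image_sq_div_one_add_sq_Ioi : (fun t : ℝ => t ^ 2 / (1 + t ^ 2)) '' Ioi 0 = Ioo 0 1 := by
  ext u
  constructor
  · rintro ⟨t, ht, rfl⟩
    have ht : 0 < t := ht
    exact ⟨by positivity, (div_lt_one (by positivity)).2 (by linarith)⟩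
  · rintro ⟨hu0, hu1⟩
    have hu : 0 < u / (1 - u) := div_pos hu0 (sub_pos.2 hu1)
    refine ⟨√(u / (1 - u)), sqrt_pos.2 hu, ?_⟩
    have : 1 - u ≠ 0 := (sub_pos.2 hu1).ne'
    simp only [sq_sqrt hu.le]
    field_simp
    ring

lemma injOn_sq_div_one_add_sq : InjOn (fun t : ℝ => t ^ 2 / (1 + t ^ 2)) (Ioi 0) := by
  intro s hs t ht hst
  have hst : s ^ 2 / (1 + s ^ 2) = t ^ 2 / (1 + t ^ 2) := hst
  rw [div_eq_div_iff (by positivity) (by positivity)] at hst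
  exact (sq_eq_sq₀ (le_of_lt hs) (le_of_lt ht)).1 (by linarith)

lemma rpow_sq_div_one_add_sq {t : ℝ} (ht : 0 < t) (s : ℝ) :
    (t ^ 2 / (1 + t ^ 2)) ^ s = t ^ (2 * s) * (1 + t ^ 2) ^ (-s) := by
  rw [div_rpow (by positivity) (by positivity), rpow_neg (by positivity), div_eq_mul_inv,
    rpow_mul ht.le, rpow_two]

lemma abs_deriv_smul_beta_integrand {a b t : ℝ} (ht : 0 < t) :
    |2 * t / (1 + t ^ 2) ^ 2| •
        ((t ^ 2 / (1 + t ^ 2)) ^ (a - 1) * (1 - t ^ 2 / (1 + t ^ 2)) ^ (b - 1))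
      = 2 * (t ^ (2 * a - 1) * (1 + t ^ 2) ^ (-(a + b))) := by
  have hs : 0 < 1 + t ^ 2 := by positivity
  have h1 : 1 - t ^ 2 / (1 + t ^ 2) = (1 + t ^ 2) ^ (-1 : ℝ) := by
    rw [rpow_neg_one]; field_simp; ring
  rw [smul_eq_mul, abs_of_pos (by positivity), rpow_sq_div_one_add_sq ht, h1, ← rpow_mul hs.le,
    div_eq_mul_inv, ← rpow_natCast, ← rpow_neg hs.le]
  have e1 : t ^ (2 * a - 1) = t * t ^ (2 * (a - 1)) := by
    rw [show 2 * a - 1 = 1 + 2 * (a - 1) by ring, rpow_add ht, rpow_one]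
  have e2 : (1 + t ^ 2) ^ (-(a + b)) = (1 + t ^ 2) ^ (-((2 : ℕ) : ℝ)) *
      ((1 + t ^ 2) ^ (-(a - 1)) * (1 + t ^ 2) ^ (-1 * (b - 1))) := by
    rw [← rpow_add hs, ← rpow_add hs]; congr 1; push_cast; ring
  rw [e1, e2]
  ring

lemma integral_rpow_mul_one_add_sq_rpow {a b : ℝ} (ha : 0 < a) (hb : 0 < b) :
    ∫ t in Ioi 0, t ^ (2 * a - 1) * (1 + t ^ 2) ^ (-(a + b))
      = Gamma a * Gamma b / (2 * Gamma (a + b)) := by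
  have h := integral_image_eq_integral_abs_deriv_smul measurableSet_Ioi
    (fun t _ => (hasDerivAt_sq_div_one_add_sq t).hasDerivWithinAt) injOn_sq_div_one_add_sq
    (fun u => u ^ (a - 1) * (1 - u) ^ (b - 1))
  rw [image_sq_div_one_add_sq_Ioi, integral_rpow_mul_one_sub_rpow ha hb,
    setIntegral_congr_fun measurableSet_Ioi fun t ht => abs_deriv_smul_beta_integrand ht,
    integral_const_mul] at h
  have hΓ := (Gamma_pos_of_pos (add_pos ha hb)).ne'
  rw [div_eq_iff hΓ] at h
  rw [eq_div_iff (mul_ne_zero two_ne_zero hΓ)]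
  linarith

lemma integrableOn_rpow_mul_one_add_sq_rpow {a b : ℝ} (ha : 0 < a) (hb : 0 < b) :
    IntegrableOn (fun t : ℝ => t ^ (2 * a - 1) * (1 + t ^ 2) ^ (-(a + b))) (Ioi 0) := by
  have h := (integrableOn_image_iff_integrableOn_abs_deriv_smul measurableSet_Ioi
    (fun t _ => (hasDerivAt_sq_div_one_add_sq t).hasDerivWithinAt) injOn_sq_div_one_add_sq
    (fun u => u ^ (a - 1) * (1 - u) ^ (b - 1))).1
  rw [image_sq_div_one_add_sq_Ioi] at h
  refine IntegrableOn.congr_fun ((h (integrableOn_rpow_mul_one_sub_rpow ha hb)).const_mul 2⁻¹)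
    (fun t ht => ?_) measurableSet_Ioi
  simp only [abs_deriv_smul_beta_integrand (mem_Ioi.1 ht)]
  ring

theorem integral_integral_swap_of_nonneg {α β : Type*} [MeasurableSpace α] [MeasurableSpace β]
    {μ : Measure α} {ν : Measure β} [SFinite μ] [SFinite ν] {f : α → β → ℝ}
    (hf : AEStronglyMeasurable (Function.uncurry f) (μ.prod ν))
    (hf_nonneg : ∀ᵐ y ∂ν, ∀ᵐ x ∂μ, 0 ≤ f x y)
    (hf_slice : ∀ᵐ y ∂ν, Integrable (f · y) μ)
    (hf_int : Integrable (fun y => ∫ x, f x y ∂μ) ν) :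
    ∫ x, ∫ y, f x y ∂ν ∂μ = ∫ y, ∫ x, f x y ∂μ ∂ν := by
  refine integral_integral_swap ((integrable_prod_iff' hf).2 ⟨hf_slice, hf_int.congr ?_⟩)
  filter_upwards [hf_nonneg] with y hy
  exact integral_congr_ae (hy.mono fun x hx => (norm_of_nonneg hx).symm)

lemma integral_rpow_mul_exp_neg_mul_sq {s b : ℝ} (hs : -1 < s) (hb : 0 < b) :
    ∫ x in Ioi 0, x ^ s * exp (-b * x ^ 2) = b ^ (-(s + 1) / 2) * Gamma ((s + 1) / 2) / 2 := by
  simp_rw [← rpow_two, integral_rpow_mul_exp_neg_mul_rpow two_pos hs hb]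
  ring

lemma structMoment_eq_integral_Ioi (q : ℝ) {l : ℝ} (hl : 0 < l) :
    structMoment q l = 2 * l * (√(2 * π))⁻¹ *
      ∫ t in Ioi 0, (t ^ 2 / (1 + t ^ 2)) ^ q * exp (-(l * t) ^ 2 / 2) := by
  set g : ℝ → ℝ := fun x =>
    (x ^ 2 / (l ^ 2 + x ^ 2)) ^ q * ((√(2 * π))⁻¹ * exp (-x ^ 2 / 2))
  have hscale : ∫ x in Ioi 0, g x = l * ∫ t in Ioi 0, g (l * t) := by
    rw [integral_comp_mul_left_Ioi g 0 hl, mul_zero, smul_eq_mul, mul_inv_cancel_left₀ hl.ne']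
  have hg : ∀ t, g (l * t) =
      (√(2 * π))⁻¹ * ((t ^ 2 / (1 + t ^ 2)) ^ q * exp (-(l * t) ^ 2 / 2)) := by
    intro t
    have : l ^ 2 ≠ 0 := by positivity
    simp only [g, mul_pow]
    rw [show l ^ 2 + l ^ 2 * t ^ 2 = l ^ 2 * (1 + t ^ 2) by ring, mul_div_mul_left _ _ this]
    ring
  calc structMoment q l = ∫ x, g |x| := by simp only [structMoment, g, sq_abs]
    _ = _ := by
      rw [integral_comp_abs, hscale]
      simp only [hg, integral_const_mul]
      ring

/-- The integrand of `l ^ (2 * θ) * structMoment q l * φ l` after substituting `x = l * t`. -/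
noncomputable def structKernel (q θ l t : ℝ) : ℝ :=
  (t ^ 2 / (1 + t ^ 2)) ^ q * (l ^ (2 * θ + 1) * exp (-((1 + t ^ 2) / 2) * l ^ 2))

section structKernel

variable {q θ : ℝ}

lemma structKernel_nonneg {l t : ℝ} (hl : 0 < l) (ht : 0 < t) : 0 ≤ structKernel q θ l t := by
  unfold structKernel; positivity

lemma measurable_structKernel : Measurable (Function.uncurry (structKernel q θ)) := by
  unfold structKernel Function.uncurry; fun_prop

lemma integrableOn_structKernel_left (hθ : -1 < θ) (t : ℝ) :
    IntegrableOn (structKernel q θ · t) (Ioi 0) :=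
  (integrableOn_rpow_mul_exp_neg_mul_sq (by positivity) (by linarith)).const_mul _

lemma integral_structKernel_left (hθ : -1 < θ) {t : ℝ} (ht : 0 < t) :
    ∫ l in Ioi 0, structKernel q θ l t
      = 2 ^ θ * Gamma (θ + 1) * (t ^ (2 * q) * (1 + t ^ 2) ^ (-(q + θ + 1))) := by
  have hs : 0 < 1 + t ^ 2 := by positivity
  simp only [structKernel]
  rw [integral_const_mul, integral_rpow_mul_exp_neg_mul_sq (by linarith) (by positivity),
    rpow_sq_div_one_add_sq ht, show -(2 * θ + 1 + 1) / 2 = -(θ + 1) by ring,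
    show (2 * θ + 1 + 1) / 2 = θ + 1 by ring, div_rpow hs.le zero_le_two,
    show -(q + θ + 1) = -q + -(θ + 1) by ring, rpow_add hs, rpow_neg zero_le_two,
    rpow_add two_pos, rpow_one]
  field_simp

end structKernel

lemma structMoment_mul_gaussianPDF_eq (q θ : ℝ) {l : ℝ} (hl : 0 < l) :
    l ^ (2 * θ) * structMoment q l * ((√(2 * π))⁻¹ * exp (-l ^ 2 / 2))
      = π⁻¹ * ∫ t in Ioi 0, structKernel q θ l t := by
  have hK : ∀ t, structKernel q θ l t = l ^ (2 * θ) * l * exp (-l ^ 2 / 2) *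
      ((t ^ 2 / (1 + t ^ 2)) ^ q * exp (-(l * t) ^ 2 / 2)) := by
    intro t
    rw [structKernel, rpow_add_one hl.ne',
      show -((1 + t ^ 2) / 2) * l ^ 2 = -l ^ 2 / 2 + -(l * t) ^ 2 / 2 by ring, exp_add]
    ring
  have hπ : π⁻¹ = 2 * ((√(2 * π))⁻¹ * (√(2 * π))⁻¹) := by
    rw [← mul_inv, mul_self_sqrt (by positivity), mul_inv, mul_inv_cancel_left₀ two_ne_zero]
  simp only [hK, integral_const_mul, structMoment_eq_integral_Ioi q hl, hπ]
  ring

lemma integral_integral_structKernel {q θ : ℝ} (hq : -(1 / 2) < q) (hθ : -(1 / 2) < θ) :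
    ∫ l in Ioi 0, ∫ t in Ioi 0, structKernel q θ l t
      = 2 ^ θ * Gamma (θ + 1) *
          (Gamma (q + 1 / 2) * Gamma (θ + 1 / 2) / (2 * Gamma (q + θ + 1))) := by
  have hq' : 0 < q + 1 / 2 := by linarith
  have hθ' : 0 < θ + 1 / 2 := by linarith
  have hbeta := integral_rpow_mul_one_add_sq_rpow hq' hθ'
  have hbeta_int := integrableOn_rpow_mul_one_add_sq_rpow hq' hθ'
  rw [show 2 * (q + 1 / 2) - 1 = 2 * q by ring,
    show q + 1 / 2 + (θ + 1 / 2) = q + θ + 1 by ring] at hbeta hbeta_int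
  have hinner : ∀ t ∈ Ioi (0 : ℝ), ∫ l in Ioi 0, structKernel q θ l t
      = 2 ^ θ * Gamma (θ + 1) * (t ^ (2 * q) * (1 + t ^ 2) ^ (-(q + θ + 1))) :=
    fun t ht => integral_structKernel_left (by linarith) ht
  rw [integral_integral_swap_of_nonneg measurable_structKernel.aestronglyMeasurable
      (ae_restrict_of_forall_mem measurableSet_Ioi fun t ht =>
        ae_restrict_of_forall_mem measurableSet_Ioi fun l hl => structKernel_nonneg hl ht)
      (Filter.Eventually.of_forall fun t => integrableOn_structKernel_left (by linarith) t)
      ((hbeta_int.const_mul _).congr ((ae_restrict_iff' measurableSet_Ioi).2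
        (Filter.Eventually.of_forall fun t ht => (hinner t ht).symm))),
    setIntegral_congr_fun measurableSet_Ioi hinner, integral_const_mul, hbeta]

theorem structMoment_mellin_identity (q θ : ℝ) (hq : q > -(1 / 2)) (hθ : θ > -(1 / 2)) :
    (2 / (2 ^ θ * Real.Gamma (θ + 1 / 2) / Real.sqrt Real.pi)) *
        ∫ l in Set.Ioi (0 : ℝ),
          l ^ (2 * θ) * structMoment q l * ((Real.sqrt (2 * Real.pi))⁻¹ * Real.exp (-l ^ 2 / 2))
      = Real.Gamma (θ + 1) * Real.Gamma (q + 1 / 2) /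
          (Real.Gamma (1 / 2) * Real.Gamma (q + θ + 1)) := by
  rw [setIntegral_congr_fun measurableSet_Ioi fun l hl => structMoment_mul_gaussianPDF_eq q θ hl,
    integral_const_mul, integral_integral_structKernel hq hθ, Gamma_one_half_eq]
  have hπ : π⁻¹ = (√π)⁻¹ * (√π)⁻¹ := by rw [← mul_inv, mul_self_sqrt pi_pos.le]
  have hΓ : Gamma (θ + 1 / 2) ≠ 0 := (Gamma_pos_of_pos (by linarith)).ne'
  rw [hπ]
  generalize Gamma (θ + 1 / 2) = G at hΓ ⊢
  field_simp
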